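/- arXiv:2402.10630 — 4 statements merged into one kernel-verified Lean document; each statement's English description precedes it below -/
import Mathlib

section
/- Let p, q ∈ [1,∞] satisfy 1/p + 1/q = 1, let μ be a σ-finite measure on a measurable space α, let n ≥ 1, and let f_1,…,f_n, g_1,…,g_n be elements of the Banach spaces L^p(μ) and L^q(μ), respectively. Then for all continuous linear functionals φ on L^p(μ) and ψ on L^q(μ) with ‖φ‖ ≤ 1 and ‖ψ‖ ≤ 1, one has ∑_{i=1}^n φ(f_i)·ψ(g_i) ≤ ‖x ↦ ‖y ↦ ∑_{i=1}^n f_i(x)·g_i(y)‖_{L^q_y(μ)}‖_{L^p_x(μ)}; that is, the injective tensor norm of ∑ f_i ⊗ g_i is dominated by the iterated L^p(L^q) norm of the pointwise dot product (x,y) ↦ ∑ f_i(x)·g_i(y). -/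
/-!
With `F := ∑ ψ (g i) • f i ∈ L^p`, the left side is `φ F ≤ ‖F‖_p`. Pointwise,
`F x = ψ (∑ f i x • g i)`, whose absolute value is at most the `L^q` norm of
`y ↦ ∑ f i x * g i y` because `‖ψ‖ ≤ 1`; taking `L^p` norms in `x` gives the bound.
-/

open MeasureTheory ENNReal

namespace MeasureTheory.Lp

variable {α E : Type*} [MeasurableSpace α] {μ : Measure α} [NormedAddCommGroup E]
  {p q : ℝ≥0∞} {ι : Type*}

section NormedField

variable {𝕜 : Type*} [NormedField 𝕜] [NormedSpace 𝕜 E]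

theorem coeFn_fun_finsetSum_smul (s : Finset ι) (c : ι → 𝕜) (h : ι → Lp E p μ) :
    ⇑(∑ i ∈ s, c i • h i) =ᵐ[μ] fun x ↦ ∑ i ∈ s, c i • h i x := by
  filter_upwards [coeFn_fun_finsetSum s (fun i ↦ c i • h i),
    (Filter.eventually_all_finset s).2 fun i _ ↦ coeFn_smul (c i) (h i)] with x hx hsmul
  rw [hx]
  exact Finset.sum_congr rfl fun i hi ↦ hsmul i hi

theorem norm_finsetSum_smul [Fact (1 ≤ q)] (s : Finset ι) (c : ι → 𝕜) (g : ι → Lp E q μ) :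
    ‖∑ i ∈ s, c i • g i‖ = (eLpNorm (fun y ↦ ∑ i ∈ s, c i • g i y) q μ).toReal := by
  rw [norm_def, eLpNorm_congr_ae (coeFn_fun_finsetSum_smul s c g)]

end NormedField

variable {𝕜 : Type*} [NontriviallyNormedField 𝕜] [NormedSpace 𝕜 E] [Fact (1 ≤ q)]

theorem coeFn_finsetSum_apply_smul (s : Finset ι) (f : ι → Lp 𝕜 p μ) (g : ι → Lp E q μ)
    (ψ : Lp E q μ →L[𝕜] 𝕜) :
    ⇑(∑ i ∈ s, ψ (g i) • f i) =ᵐ[μ] fun x ↦ ψ (∑ i ∈ s, f i x • g i) := by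
  filter_upwards [coeFn_fun_finsetSum_smul s (fun i ↦ ψ (g i)) f] with x hx
  simp only [hx, map_sum, map_smul, smul_eq_mul, mul_comm]

theorem eLpNorm_finsetSum_apply_smul_le (s : Finset ι) (f : ι → Lp 𝕜 p μ) (g : ι → Lp E q μ)
    {ψ : Lp E q μ →L[𝕜] 𝕜} (hψ : ‖ψ‖ ≤ 1) :
    eLpNorm (⇑(∑ i ∈ s, ψ (g i) • f i : Lp 𝕜 p μ)) p μ ≤
      eLpNorm (fun x ↦ ‖∑ i ∈ s, f i x • g i‖) p μ := by
  refine eLpNorm_mono_ae ?_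
  filter_upwards [coeFn_finsetSum_apply_smul s f g ψ] with x hx
  rw [hx, norm_norm]
  exact (ψ.le_of_opNorm_le hψ _).trans (one_mul _).le

end MeasureTheory.Lp

theorem stmt4_general {α : Type*} [MeasurableSpace α] (μ : Measure α)
    (p q : ℝ≥0∞) [Fact (1 ≤ p)] [Fact (1 ≤ q)]
    (n : ℕ) (f : Fin n → Lp ℝ p μ) (g : Fin n → Lp ℝ q μ)
    (φ : Lp ℝ p μ →L[ℝ] ℝ) (ψ : Lp ℝ q μ →L[ℝ] ℝ) (hφ : ‖φ‖ ≤ 1) (hψ : ‖ψ‖ ≤ 1) :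
    ENNReal.ofReal (∑ i, φ (f i) * ψ (g i)) ≤
      eLpNorm (fun x =>
        (eLpNorm (fun y => ∑ i, (f i : α → ℝ) x * (g i : α → ℝ) y) q μ).toReal) p μ := by
  set F : Lp ℝ p μ := ∑ i, ψ (g i) • f i
  have hφF : ∑ i, φ (f i) * ψ (g i) = φ F := by
    simp only [F, map_sum, map_smul, smul_eq_mul, mul_comm]
  have hinner : (fun x ↦ ‖∑ i, f i x • g i‖) = fun x ↦
      (eLpNorm (fun y => ∑ i, (f i : α → ℝ) x * (g i : α → ℝ) y) q μ).toReal := by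
    simp only [Lp.norm_finsetSum_smul, smul_eq_mul]
  calc ENNReal.ofReal (∑ i, φ (f i) * ψ (g i)) = ENNReal.ofReal (φ F) := by rw [hφF]
    _ ≤ ENNReal.ofReal ‖F‖ := ENNReal.ofReal_le_ofReal <|
        (le_abs_self _).trans <| (φ.le_of_opNorm_le hφ F).trans (one_mul _).le
    _ ≤ eLpNorm F p μ := by rw [Lp.norm_def]; exact ENNReal.ofReal_toReal_le
    _ ≤ _ := by rw [← hinner]; exact Lp.eLpNorm_finsetSum_apply_smul_le _ f g hψ

/-- **Injective tensor norm dominated by the iterated `L^p(L^q)` norm of the dot product.**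
For conjugate exponents and `f i ∈ L^p(μ)`, `g i ∈ L^q(μ)`, and unit functionals `φ, ψ`,
one has `∑ φ(f i) ψ(g i) ≤ ‖x ↦ ‖y ↦ ∑ f i x * g i y‖_{L^q}‖_{L^p}`. -/
theorem stmt4 {α : Type*} [MeasurableSpace α] (μ : Measure α) [SigmaFinite μ]
    (p q : ℝ≥0∞) [Fact (1 ≤ p)] [Fact (1 ≤ q)] (hpq : 1 / p + 1 / q = 1)
    (n : ℕ) (hn : 1 ≤ n) (f : Fin n → Lp ℝ p μ) (g : Fin n → Lp ℝ q μ)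
    (φ : Lp ℝ p μ →L[ℝ] ℝ) (ψ : Lp ℝ q μ →L[ℝ] ℝ) (hφ : ‖φ‖ ≤ 1) (hψ : ‖ψ‖ ≤ 1) :
    ENNReal.ofReal (∑ i, φ (f i) * ψ (g i)) ≤
      eLpNorm (fun x =>
        (eLpNorm (fun y => ∑ i, (f i : α → ℝ) x * (g i : α → ℝ) y) q μ).toReal) p μ :=
  stmt4_general μ p q n f g φ ψ hφ hψ
end

section
/- For n ≥ 1, let f_i = 1_{[i-1,i)} : ℝ → ℝ (indicator functions of consecutive unit intervals) for i = 1,…,n, with Lebesgue measure on ℝ. Then: (a) ∫_ℝ ∑_{i=1}^n f_i(x)·f_i(x) dx = n; and (b) for every p ∈ (0,∞) and q ∈ (0,∞], ‖x ↦ ‖y ↦ ∑_{i=1}^n f_i(x)·f_i(y)‖_{L^q_y}‖_{L^p_x} = n^{1/p}. Consequently, the constant in the vector-valued Hölder inequality with iterated norms on the right-hand side must depend on the dimension n (for 1/p + 1/q = 1 with p ∈ (1,∞), the ratio n / n^{1/p} is unbounded in n). -/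
open MeasureTheory ENNReal Filter

lemma elp_ind_one {s : Set ℝ} (hs : MeasurableSet s) (h1 : volume s = 1) {q : ℝ≥0∞}
    (hq : 0 < q) :
    eLpNorm (s.indicator fun _ => (1 : ℝ)) q volume = 1 := by
  rcases eq_or_ne q ∞ with rfl | hq'
  · rw [eLpNorm_exponent_top, eLpNormEssSup_indicator_const_eq s (1:ℝ) (by simp [h1])]
    simp
  · rw [eLpNorm_indicator_const hs hq.ne' hq', h1, ENNReal.one_rpow]
    simp

/-- **Necessity of the dimensional constant** (Example 1.1 of the paper).
For `f i = 1_{[i,i+1)}`, `i = 0,…,n-1` (equivalently `1_{[i-1,i)}`, `i = 1,…,n`):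
(a) `∫ ∑ f i x * f i x dx = n`;
(b) the iterated `L^p_x(L^q_y)` norm of `(x,y) ↦ ∑ f i x * f i y` equals `n^{1/p}` for
all `p ∈ (0,∞)`, `q ∈ (0,∞]`;
(c) consequently `n / n^{1/p} → ∞` for `p ∈ (1,∞)`, so the constant in the vector-valued
Hölder inequality must depend on `n`. -/
theorem stmt5 (n : ℕ) (hn : 1 ≤ n) :
    (∫ x : ℝ, ∑ i : Fin n,
        (Set.Ico (i : ℝ) ((i : ℝ) + 1)).indicator (fun _ => (1 : ℝ)) x *
        (Set.Ico (i : ℝ) ((i : ℝ) + 1)).indicator (fun _ => (1 : ℝ)) x) = n ∧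
    (∀ p q : ℝ≥0∞, 0 < p → p ≠ ⊤ → 0 < q →
      eLpNorm (fun x : ℝ =>
          (eLpNorm (fun y : ℝ => ∑ i : Fin n,
              (Set.Ico (i : ℝ) ((i : ℝ) + 1)).indicator (fun _ => (1 : ℝ)) x *
              (Set.Ico (i : ℝ) ((i : ℝ) + 1)).indicator (fun _ => (1 : ℝ)) y) q volume).toReal)
        p volume = (n : ℝ≥0∞) ^ (1 / p.toReal)) ∧
    (∀ p : ℝ, 1 < p →
      Tendsto (fun m : ℕ => (m : ℝ) / (m : ℝ) ^ (1 / p)) atTop atTop) := by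
  have hvol : ∀ i : Fin n, volume (Set.Ico (i : ℝ) ((i : ℝ) + 1)) = 1 := by
    intro i; rw [Real.volume_Ico]; simp
  refine ⟨?_, ?_, ?_⟩
  · -- part (a)
    have h1 : ∀ x : ℝ, (∑ i : Fin n,
        (Set.Ico (i : ℝ) ((i : ℝ) + 1)).indicator (fun _ => (1 : ℝ)) x *
        (Set.Ico (i : ℝ) ((i : ℝ) + 1)).indicator (fun _ => (1 : ℝ)) x)
        = ∑ i : Fin n, (Set.Ico (i : ℝ) ((i : ℝ) + 1)).indicator (fun _ => (1 : ℝ)) x := by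
      intro x
      refine Finset.sum_congr rfl fun i _ => ?_
      by_cases hx : x ∈ Set.Ico (i : ℝ) ((i : ℝ) + 1) <;> simp [hx]
    simp_rw [h1]
    rw [integral_finset_sum]
    · have : ∀ i : Fin n,
          (∫ x : ℝ, (Set.Ico (i : ℝ) ((i : ℝ) + 1)).indicator (fun _ => (1 : ℝ)) x) = 1 := by
        intro i
        rw [integral_indicator_const (1 : ℝ) measurableSet_Ico, measureReal_def, hvol i]
        simp
      simp [this]
    · intro i _
      exact (integrable_indicator_iff measurableSet_Ico).2
        (integrableOn_const (by rw [hvol i]; exact one_ne_top))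
  · -- part (b)
    intro p q hp hp' hq
    have key : ∀ x : ℝ,
        (eLpNorm (fun y : ℝ => ∑ i : Fin n,
            (Set.Ico (i : ℝ) ((i : ℝ) + 1)).indicator (fun _ => (1 : ℝ)) x *
            (Set.Ico (i : ℝ) ((i : ℝ) + 1)).indicator (fun _ => (1 : ℝ)) y) q volume).toReal
        = (Set.Ico (0 : ℝ) (n : ℝ)).indicator (fun _ => (1 : ℝ)) x := by
      intro x
      by_cases hx : x ∈ Set.Ico (0 : ℝ) (n : ℝ)
      · obtain ⟨hx0, hxn⟩ := hx
        set k : ℕ := ⌊x⌋.toNat with hk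
        have hfk : (⌊x⌋ : ℝ) = (k : ℝ) := by
          rw [hk]; norm_cast; exact (Int.toNat_of_nonneg (Int.floor_nonneg.2 hx0)).symm
        have hkn : k < n := by
          have : (k : ℝ) < n := lt_of_le_of_lt (by rw [← hfk]; exact Int.floor_le x) hxn
          exact_mod_cast this
        set K : Fin n := ⟨k, hkn⟩ with hK
        have hKx : x ∈ Set.Ico (K : ℝ) ((K : ℝ) + 1) := by
          constructor
          · show ((K : ℕ) : ℝ) ≤ x
            rw [hK]; simpa [← hfk] using Int.floor_le x
          · show x < ((K : ℕ) : ℝ) + 1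
            rw [hK]; simpa [← hfk] using Int.lt_floor_add_one x
        have hfun : (fun y : ℝ => ∑ i : Fin n,
            (Set.Ico (i : ℝ) ((i : ℝ) + 1)).indicator (fun _ => (1 : ℝ)) x *
            (Set.Ico (i : ℝ) ((i : ℝ) + 1)).indicator (fun _ => (1 : ℝ)) y)
            = (Set.Ico (K : ℝ) ((K : ℝ) + 1)).indicator (fun _ => (1 : ℝ)) := by
          funext y
          rw [Finset.sum_eq_single K]
          · rw [Set.indicator_of_mem hKx, one_mul]
          · intro i _ hi
            have hxi : x ∉ Set.Ico (i : ℝ) ((i : ℝ) + 1) := by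
              intro ⟨h1, h2⟩
              apply hi
              have hik : (i : ℕ) = k := by
                have hfl : ⌊x⌋ = ((i : ℕ) : ℤ) := by
                  apply Int.floor_eq_iff.2
                  constructor <;> push_cast <;> [exact h1; exact h2]
                omega
              exact Fin.ext hik
            rw [Set.indicator_of_notMem hxi, zero_mul]
          · intro h; exact absurd (Finset.mem_univ K) h
        rw [hfun, elp_ind_one measurableSet_Ico (hvol K) hq,
          Set.indicator_of_mem (Set.mem_Ico.mpr ⟨hx0, hxn⟩)]
        simp
      · have hfun : (fun y : ℝ => ∑ i : Fin n,
            (Set.Ico (i : ℝ) ((i : ℝ) + 1)).indicator (fun _ => (1 : ℝ)) x *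
            (Set.Ico (i : ℝ) ((i : ℝ) + 1)).indicator (fun _ => (1 : ℝ)) y)
            = fun _ => (0 : ℝ) := by
          funext y
          refine Finset.sum_eq_zero fun i _ => ?_
          have hxi : x ∉ Set.Ico (i : ℝ) ((i : ℝ) + 1) := by
            intro hmem
            obtain ⟨h1, h2⟩ := hmem
            apply hx
            constructor
            · exact le_trans (by positivity) h1
            · refine lt_of_lt_of_le h2 ?_
              have : (i : ℕ) + 1 ≤ n := i.2
              calc ((i : ℕ) : ℝ) + 1 = (((i : ℕ) + 1 : ℕ) : ℝ) := by push_cast; ring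
                _ ≤ n := by exact_mod_cast this
          rw [Set.indicator_of_notMem hxi, zero_mul]
        rw [hfun, eLpNorm_zero', Set.indicator_of_notMem hx]
        simp
    simp_rw [key]
    rw [eLpNorm_indicator_const measurableSet_Ico hp.ne' hp', Real.volume_Ico]
    simp
  · -- part (c)
    intro p hp
    have hpos : 0 < 1 - 1 / p := by
      rw [sub_pos, div_lt_one (lt_trans one_pos hp)]; exact hp
    have h := (tendsto_rpow_atTop hpos).comp (tendsto_natCast_atTop_atTop (R := ℝ))
    refine h.congr' ?_
    filter_upwards [eventually_gt_atTop 0] with m hm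
    have hm' : (0 : ℝ) < m := by exact_mod_cast hm
    show (m : ℝ) ^ (1 - 1/p) = (m : ℝ) / (m : ℝ) ^ (1/p)
    rw [Real.rpow_sub hm', Real.rpow_one]
end

section
/- For every n ≥ 1 and κ ≥ 1 there exist constants 0 < c ≤ C, depending only on n and κ, with the following property: for every function N : ℝ^n → ℝ satisfying N(x) ≥ 0 for all x, N(λ • x) = |λ|·N(x) for all λ ∈ ℝ and x ∈ ℝ^n, and N(x + y) ≤ κ·(N(x) + N(y)) for all x, y ∈ ℝ^n (a semi-quasi-norm with quasi-triangle constant κ), there exists a positive semidefinite real n×n matrix A such that c·N(x) ≤ |A x| ≤ C·N(x) for every x ∈ ℝ^n, where |·| is the Euclidean norm. -/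
open Matrix

/-- The Euclidean norm on `Fin k → ℝ`. -/
noncomputable def euclNorm {k : ℕ} (x : Fin k → ℝ) : ℝ := Real.sqrt (∑ i, x i ^ 2)

/-- A (semi-)quasi-norm on a real vector space `Z` with quasi-triangle constant `κ`
(the null space may be nontrivial). -/
def IsQuasiNorm {Z : Type*} [AddCommGroup Z] [Module ℝ Z] (N : Z → ℝ) (κ : ℝ) : Prop :=
  (∀ z, 0 ≤ N z) ∧ (∀ (l : ℝ) (z : Z), N (l • z) = |l| * N z) ∧
    ∀ z w, N (z + w) ≤ κ * (N z + N w)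

/-! ### Auxiliary lemmas about `euclNorm` -/

lemma euclNorm_nonneg {k : ℕ} (x : Fin k → ℝ) : 0 ≤ euclNorm x := Real.sqrt_nonneg _

lemma abs_le_euclNorm {k : ℕ} (x : Fin k → ℝ) (i : Fin k) : |x i| ≤ euclNorm x := by
  rw [euclNorm, ← Real.sqrt_sq_eq_abs]
  exact Real.sqrt_le_sqrt (Finset.single_le_sum (f := fun j => x j ^ 2)
    (fun j _ => sq_nonneg _) (Finset.mem_univ i))

lemma euclNorm_le {k : ℕ} (x : Fin k → ℝ) (a : ℝ) (ha : 0 ≤ a) (h : ∀ i, |x i| ≤ a) :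
    euclNorm x ≤ Real.sqrt k * a := by
  rw [euclNorm, ← Real.sqrt_sq ha, ← Real.sqrt_mul (by positivity)]
  apply Real.sqrt_le_sqrt
  calc ∑ i, x i ^ 2 ≤ ∑ _i : Fin k, a ^ 2 := by
        apply Finset.sum_le_sum
        intro i _
        rw [← sq_abs]
        exact pow_le_pow_left₀ (abs_nonneg _) (h i) 2
    _ = k * a ^ 2 := by simp [mul_comm]

lemma euclNorm_dot {k : ℕ} (x : Fin k → ℝ) : euclNorm x = Real.sqrt (x ⬝ᵥ x) := by
  simp [euclNorm, dotProduct, sq]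

lemma dot_self_mulVec {k : ℕ} (A : Matrix (Fin k) (Fin k) ℝ) (x : Fin k → ℝ) :
    (A *ᵥ x) ⬝ᵥ (A *ᵥ x) = x ⬝ᵥ ((Aᵀ * A) *ᵥ x) := by
  rw [← Matrix.mulVec_mulVec, Matrix.dotProduct_mulVec, Matrix.mulVec_transpose,
    dotProduct_comm]

/-! ### Auxiliary lemmas about quasi-norms -/

lemma IsQuasiNorm.zero {Z : Type*} [AddCommGroup Z] [Module ℝ Z] {N : Z → ℝ} {κ : ℝ}
    (h : IsQuasiNorm N κ) : N 0 = 0 := by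
  have := h.2.1 0 0
  simpa using this

lemma IsQuasiNorm.neg {Z : Type*} [AddCommGroup Z] [Module ℝ Z] {N : Z → ℝ} {κ : ℝ}
    (h : IsQuasiNorm N κ) (z : Z) : N (-z) = N z := by
  have := h.2.1 (-1) z
  simpa using this

lemma IsQuasiNorm.sum {Z : Type*} [AddCommGroup Z] [Module ℝ Z] {N : Z → ℝ} {κ : ℝ}
    (h : IsQuasiNorm N κ) (hκ : 1 ≤ κ) {ι : Type*} (s : Finset ι) (f : ι → Z) :
    N (∑ i ∈ s, f i) ≤ κ ^ s.card * ∑ i ∈ s, N (f i) := by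
  classical
  induction s using Finset.cons_induction with
  | empty => simp [h.zero]
  | cons a s ha ih =>
    rw [Finset.sum_cons, Finset.sum_cons, Finset.card_cons]
    have h1 : N (f a + ∑ i ∈ s, f i) ≤ κ * (N (f a) + N (∑ i ∈ s, f i)) := h.2.2 _ _
    have hκ0 : 0 < κ := lt_of_lt_of_le one_pos hκ
    have hp : (1:ℝ) ≤ κ ^ s.card := one_le_pow₀ hκ
    calc N (f a + ∑ i ∈ s, f i) ≤ κ * (N (f a) + N (∑ i ∈ s, f i)) := h1
      _ ≤ κ * (κ ^ s.card * N (f a) + κ ^ s.card * ∑ i ∈ s, N (f i)) := by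
          apply mul_le_mul_of_nonneg_left _ hκ0.le
          gcongr
          · nlinarith [h.1 (f a)]
      _ = κ ^ (s.card + 1) * (N (f a) + ∑ i ∈ s, N (f i)) := by ring

/-- Determinant bound in terms of a uniform entry bound. -/
lemma abs_det_le_of_abs_entries_le {d : ℕ} (M : Matrix (Fin d) (Fin d) ℝ) {K : ℝ}
    (h : ∀ i j, |M i j| ≤ K) : |M.det| ≤ Nat.factorial d * K ^ d := by
  rw [Matrix.det_apply']
  calc |∑ σ : Equiv.Perm (Fin d), ((Equiv.Perm.sign σ : ℤ) : ℝ) * ∏ i, M (σ i) i|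
      ≤ ∑ σ : Equiv.Perm (Fin d), |((Equiv.Perm.sign σ : ℤ) : ℝ) * ∏ i, M (σ i) i| :=
        Finset.abs_sum_le_sum_abs _ _
    _ ≤ ∑ _σ : Equiv.Perm (Fin d), K ^ d := by
        apply Finset.sum_le_sum
        intro σ _
        have hs : |((Equiv.Perm.sign σ : ℤ) : ℝ)| = 1 := by
          rcases Int.units_eq_one_or (Equiv.Perm.sign σ) with hs | hs <;> simp [hs]
        rw [abs_mul, hs, one_mul]
        calc |∏ i, M (σ i) i| = ∏ i, |M (σ i) i| := by rw [Finset.abs_prod]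
          _ ≤ ∏ _i : Fin d, K := Finset.prod_le_prod (fun _ _ => abs_nonneg _)
              (fun i _ => h _ _)
          _ = K ^ d := by simp
    _ = Nat.factorial d * K ^ d := by simp [Fintype.card_perm]

/-- On a complement of the null space, a quasi-norm is bounded below by the norm. -/
lemma exists_qn_lower_bound {n : ℕ} {N : (Fin n → ℝ) → ℝ} {κ : ℝ}
    (h : IsQuasiNorm N κ) (hκ : 1 ≤ κ)
    (W : Submodule ℝ (Fin n → ℝ))
    (hW : ∀ x ∈ W, N x = 0 → x = 0)
    {CN : ℝ} (hCN : ∀ z, N z ≤ CN * ‖z‖) :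
    ∃ cN > 0, ∀ w : W, cN * ‖w‖ ≤ N ↑w := by
  by_contra hcon
  push_neg at hcon
  have hκ0 : (0:ℝ) < κ := lt_of_lt_of_le one_pos hκ
  have hseq : ∀ k : ℕ, ∃ u : W, ‖u‖ = 1 ∧ N ↑u < 1 / (k + 1) := by
    intro k
    obtain ⟨w, hw⟩ := hcon (1 / (k + 1)) (by positivity)
    have hw0 : w ≠ 0 := by
      rintro rfl
      simp at hw
      exact absurd hw (not_lt.mpr (h.1 0))
    have hnw : (0:ℝ) < ‖w‖ := norm_pos_iff.mpr hw0
    refine ⟨‖w‖⁻¹ • w, ?_, ?_⟩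
    · rw [← Submodule.norm_coe, show ((‖w‖⁻¹ • w : W) : Fin n → ℝ) = ‖w‖⁻¹ • (w : Fin n → ℝ) from rfl,
        norm_smul, norm_inv, Real.norm_eq_abs, abs_norm]
      rw [Submodule.norm_coe]
      exact inv_mul_cancel₀ hnw.ne'
    · have : N ↑(‖w‖⁻¹ • w) = ‖w‖⁻¹ * N ↑w := by
        rw [Submodule.coe_smul]
        rw [h.2.1]
        rw [abs_of_pos (inv_pos.mpr hnw)]
      rw [this]
      calc ‖w‖⁻¹ * N ↑w < ‖w‖⁻¹ * (1 / (k + 1) * ‖w‖) := by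
            apply mul_lt_mul_of_pos_left _ (inv_pos.mpr hnw)
            exact hw
        _ = 1 / (k + 1) := by
            field_simp
  choose u hu1 hu2 using hseq
  have husph : ∀ k, u k ∈ Metric.sphere (0 : W) 1 := by
    intro k; simpa [mem_sphere_zero_iff_norm] using hu1 k
  obtain ⟨x, hx, φ, hφ, hconv⟩ := (isCompact_sphere (0 : W) 1).tendsto_subseq husph
  have hbound : ∀ k : ℕ, N ↑x ≤ κ * (1 / (φ k + 1) + CN * ‖x - u (φ k)‖) := by
    intro k
    have h2 := h.2.2 (↑(u (φ k)) : Fin n → ℝ) ((x : Fin n → ℝ) - ↑(u (φ k)))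
    rw [add_sub_cancel] at h2
    calc N ↑x ≤ κ * (N ↑(u (φ k)) + N ((x : Fin n → ℝ) - ↑(u (φ k)))) := h2
      _ ≤ κ * (1 / (φ k + 1) + CN * ‖x - u (φ k)‖) := by
          apply mul_le_mul_of_nonneg_left _ hκ0.le
          apply add_le_add (hu2 (φ k)).le
          calc N ((x : Fin n → ℝ) - ↑(u (φ k))) ≤ CN * ‖(x : Fin n → ℝ) - ↑(u (φ k))‖ :=
                hCN _
            _ = CN * ‖x - u (φ k)‖ := rfl
  have T1 : Filter.Tendsto (fun k : ℕ => 1 / ((φ k : ℝ) + 1)) Filter.atTop (nhds 0) := by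
    apply squeeze_zero (fun k => by positivity) (g := fun k : ℕ => 1 / ((k : ℝ) + 1))
    · intro k
      apply one_div_le_one_div_of_le (by positivity)
      have hkk : (k : ℝ) ≤ (φ k : ℝ) := Nat.cast_le.mpr hφ.le_apply
      linarith
    · exact tendsto_one_div_add_atTop_nhds_zero_nat
  have T2 : Filter.Tendsto (fun k : ℕ => ‖x - u (φ k)‖) Filter.atTop (nhds 0) := by
    have := tendsto_iff_norm_sub_tendsto_zero.mp hconv
    simpa [norm_sub_rev] using this
  have T3 : Filter.Tendsto (fun k : ℕ => κ * (1 / ((φ k : ℝ) + 1) + CN * ‖x - u (φ k)‖))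
      Filter.atTop (nhds (κ * (0 + CN * 0))) :=
    (T1.add (T2.const_mul CN)).const_mul κ
  have hNx : N ↑x ≤ κ * (0 + CN * 0) := ge_of_tendsto' T3 hbound
  have hNx0 : N ↑x = 0 := le_antisymm (by simpa using hNx) (h.1 _)
  have hx0 : (x : Fin n → ℝ) = 0 := hW _ x.2 hNx0
  have : ‖x‖ = 1 := by simpa [mem_sphere_zero_iff_norm] using hx
  rw [show x = 0 from Subtype.ext hx0] at this
  simp at this

section
open scoped MatrixOrder in
lemma psd_sqrt_exists {n : ℕ} (M : Matrix (Fin n) (Fin n) ℝ) (hM : M.PosSemidef) :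
    ∃ S : Matrix (Fin n) (Fin n) ℝ, S.PosSemidef ∧ S * S = M :=
  ⟨CFC.sqrt M, (CFC.sqrt_nonneg M).posSemidef, CFC.sqrt_mul_sqrt_self M hM.nonneg⟩
end

set_option maxHeartbeats 2000000 in
set_option synthInstance.maxHeartbeats 200000 in
/-- **John-ellipsoid/Aoki–Rolewicz theorem for semi-quasi-norms on `ℝ^n`** (Proposition 3.1):
every semi-quasi-norm `N` on `ℝ^n` with quasi-triangle constant `κ` is equivalent, with
constants depending only on `n` and `κ`, to `x ↦ |A x|` for some positive semidefinite
matrix `A`. -/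
theorem stmt7 (n : ℕ) (hn : 1 ≤ n) (κ : ℝ) (hκ : 1 ≤ κ) :
    ∃ c C : ℝ, 0 < c ∧ c ≤ C ∧
      ∀ N : (Fin n → ℝ) → ℝ, IsQuasiNorm N κ →
        ∃ A : Matrix (Fin n) (Fin n) ℝ, A.PosSemidef ∧
          ∀ x : Fin n → ℝ,
            c * N x ≤ euclNorm (A.mulVec x) ∧ euclNorm (A.mulVec x) ≤ C * N x := by
  classical
  have hκ0 : (0:ℝ) < κ := lt_of_lt_of_le one_pos hκ
  have hn0 : (0:ℝ) < n := by exact_mod_cast hn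
  have hκp : (0:ℝ) < κ ^ (n + 1) := pow_pos hκ0 _
  have hκp1 : (1:ℝ) ≤ κ ^ (n + 1) := one_le_pow₀ hκ
  refine ⟨((n : ℝ) * κ ^ (n + 1))⁻¹, 2 * κ * Real.sqrt n, by positivity, ?_, ?_⟩
  · -- c ≤ C
    have hn1 : (1:ℝ) ≤ n := by exact_mod_cast hn
    have h1 : ((n : ℝ) * κ ^ (n + 1))⁻¹ ≤ 1 := by
      rw [inv_le_one_iff₀]
      right
      calc (1:ℝ) = 1 * 1 := by ring
        _ ≤ (n : ℝ) * κ ^ (n + 1) := mul_le_mul hn1 hκp1 one_pos.le (by positivity)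
    have hsq : (1:ℝ) ≤ Real.sqrt n := by
      rw [show (1:ℝ) = Real.sqrt 1 by simp]
      exact Real.sqrt_le_sqrt (by exact_mod_cast hn)
    nlinarith
  intro N hN
  -- upper bound for N by the sup norm
  set CN : ℝ := κ ^ n * ∑ i, N (Pi.single i 1) with hCNdef
  have hCN0 : 0 ≤ CN := by
    apply mul_nonneg (by positivity)
    exact Finset.sum_nonneg fun i _ => hN.1 _
  have hCN : ∀ z : Fin n → ℝ, N z ≤ CN * ‖z‖ := by
    intro z
    have hz : z = ∑ i, z i • (Pi.single i 1 : Fin n → ℝ) := by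
      funext j
      rw [Finset.sum_apply]
      have hterm : ∀ i, (z i • (Pi.single i 1 : Fin n → ℝ)) j = if i = j then z i else 0 := by
        intro i
        rw [Pi.smul_apply, smul_eq_mul, Pi.single_apply]
        by_cases h : i = j
        · simp [h]
        · simp [h, Ne.symm h]
      simp [hterm]
    calc N z = N (∑ i, z i • (Pi.single i 1 : Fin n → ℝ)) := by rw [← hz]
      _ ≤ κ ^ (Finset.univ : Finset (Fin n)).card * ∑ i, N (z i • (Pi.single i 1 : Fin n → ℝ)) :=
          hN.sum hκ _ _
      _ = κ ^ n * ∑ i, |z i| * N (Pi.single i 1) := by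
          rw [Finset.card_univ, Fintype.card_fin]
          congr 1
          exact Finset.sum_congr rfl fun i _ => hN.2.1 _ _
      _ ≤ κ ^ n * ∑ i, ‖z‖ * N (Pi.single i 1) := by
          apply mul_le_mul_of_nonneg_left _ (by positivity)
          apply Finset.sum_le_sum
          intro i _
          apply mul_le_mul_of_nonneg_right _ (hN.1 _)
          calc |z i| = ‖z i‖ := (Real.norm_eq_abs _).symm
            _ ≤ ‖z‖ := norm_le_pi_norm z i
      _ = CN * ‖z‖ := by rw [← Finset.mul_sum, hCNdef]; ring
  -- the null space
  obtain ⟨V, hVmem⟩ : ∃ V : Submodule ℝ (Fin n → ℝ), ∀ z, z ∈ V ↔ N z = 0 :=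
    ⟨{ carrier := {z | N z = 0}
       add_mem' := by
         intro a b ha hb
         simp only [Set.mem_setOf_eq] at *
         have := hN.2.2 a b
         rw [ha, hb] at this
         simpa using le_antisymm (by simpa using this) (hN.1 _)
       zero_mem' := hN.zero
       smul_mem' := by
         intro c a ha
         simp only [Set.mem_setOf_eq] at *
         rw [hN.2.1, ha, mul_zero] }, fun z => Iff.rfl⟩
  obtain ⟨W, hVW⟩ := V.exists_isCompl
  have hWpos : ∀ x ∈ W, N x = 0 → x = 0 := by
    intro x hxW hx0
    exact (Submodule.disjoint_def.mp hVW.disjoint) x ((hVmem x).mpr hx0) hxW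
  obtain ⟨cN, hcN0, hcN⟩ := exists_qn_lower_bound hN hκ W hWpos hCN
  -- basis of the complement
  obtain ⟨d, hdn, hbne⟩ : ∃ d : ℕ, d ≤ n ∧ Nonempty (Module.Basis (Fin d) ℝ W) := by
    refine ⟨Module.finrank ℝ W, ?_, ⟨Module.finBasis ℝ W⟩⟩
    have h1 : Module.finrank ℝ W ≤ Module.finrank ℝ (Fin n → ℝ) := W.finrank_le
    rwa [Module.finrank_fin_fun] at h1
  obtain ⟨b⟩ := hbne
  set Mat : (Fin d → W) → Matrix (Fin d) (Fin d) ℝ :=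
    fun v => Matrix.of fun i j => b.repr (v j) i with hMatdef
  -- bounds on the coordinate functionals
  have hrep : ∀ i : Fin d, ∃ Ci : ℝ, 0 ≤ Ci ∧ ∀ w : W, |b.repr w i| ≤ Ci * ‖w‖ := by
    intro i
    set g : W →ₗ[ℝ] ℝ := (LinearMap.proj i) ∘ₗ b.equivFun.toLinearMap with hgdef
    set G : W →L[ℝ] ℝ := LinearMap.toContinuousLinearMap g with hGdef
    refine ⟨‖G‖, ContinuousLinearMap.opNorm_nonneg G, fun w => ?_⟩
    have h1 : |b.repr w i| = ‖G w‖ := by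
      simp [hGdef, hgdef, Real.norm_eq_abs, Module.Basis.equivFun_apply]
    rw [h1]
    exact G.le_opNorm w
  choose Cf hCf0 hCf using hrep
  set K : ℝ := (∑ i, Cf i) * cN⁻¹ with hKdef
  have hK0 : 0 ≤ K := by
    apply mul_nonneg (Finset.sum_nonneg fun i _ => hCf0 i) (inv_nonneg.mpr hcN0.le)
  have hentry : ∀ (v : Fin d → W), (∀ j, N ↑(v j) ≤ 1) → ∀ i j, |Mat v i j| ≤ K := by
    intro v hv i j
    have hnv : ‖v j‖ ≤ cN⁻¹ := by
      rw [← one_div]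
      rw [le_div_iff₀ hcN0]
      calc ‖v j‖ * cN = cN * ‖v j‖ := mul_comm _ _
        _ ≤ N ↑(v j) := hcN _
        _ ≤ 1 := hv j
    calc |Mat v i j| = |b.repr (v j) i| := rfl
      _ ≤ Cf i * ‖v j‖ := hCf i _
      _ ≤ (∑ i', Cf i') * cN⁻¹ := by
          apply mul_le_mul _ hnv (norm_nonneg _) (Finset.sum_nonneg fun i' _ => hCf0 i')
          exact Finset.single_le_sum (fun i' _ => hCf0 i') (Finset.mem_univ i)
  -- the family set and its determinant sup
  set S : Set (Fin d → W) := {v | ∀ j, N ↑(v j) ≤ 1} with hSdef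
  set Dset : Set ℝ := (fun v => |(Mat v).det|) '' S with hDdef
  have hDbdd : BddAbove Dset := by
    refine ⟨Nat.factorial d * K ^ d, ?_⟩
    rintro y ⟨v, hvS, rfl⟩
    exact abs_det_le_of_abs_entries_le _ (hentry v hvS)
  -- an admissible family with positive determinant
  have hb0 : ∀ j : Fin d, 0 < N ↑(b j) := by
    intro j
    rcases (hN.1 ↑(b j)).lt_or_eq with h' | h'
    · exact h'
    · exfalso
      have : (b j : Fin n → ℝ) = 0 := hWpos _ (b j).2 h'.symm
      exact b.ne_zero j (Subtype.ext this)
  set v0 : Fin d → W := fun j => (N ↑(b j))⁻¹ • b j with hv0def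
  have hv0S : v0 ∈ S := by
    intro j
    have : N ↑(v0 j) = (N ↑(b j))⁻¹ * N ↑(b j) := by
      rw [hv0def]
      simp only [Submodule.coe_smul]
      rw [hN.2.1, abs_of_pos (inv_pos.mpr (hb0 j))]
    rw [this, inv_mul_cancel₀ (hb0 j).ne']
  have hMat0 : Mat v0 = Matrix.diagonal fun j => (N ↑(b j))⁻¹ := by
    ext i j
    show (b.repr ((N ↑(b j))⁻¹ • b j)) i = _
    rw [_root_.map_smul, Finsupp.smul_apply, Module.Basis.repr_self, Finsupp.single_apply,
      Matrix.diagonal_apply]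
    by_cases hij : i = j
    · subst hij; simp
    · simp [hij, Ne.symm hij]
  have hFv0 : 0 < |(Mat v0).det| := by
    rw [hMat0, Matrix.det_diagonal]
    rw [abs_of_pos (Finset.prod_pos fun j _ => inv_pos.mpr (hb0 j))]
    exact Finset.prod_pos fun j _ => inv_pos.mpr (hb0 j)
  set s : ℝ := sSup Dset with hsdef
  have hDne : Dset.Nonempty := ⟨_, v0, hv0S, rfl⟩
  have hs0 : 0 < s := lt_of_lt_of_le hFv0 (le_csSup hDbdd ⟨v0, hv0S, rfl⟩)
  obtain ⟨y, ⟨v, hvS, rfl⟩, hy⟩ := exists_lt_of_lt_csSup hDne (half_lt_self hs0)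
  have hy' : s / 2 < |(Mat v).det| := hy
  have hdet0 : (0:ℝ) < |(Mat v).det| := lt_trans (half_pos hs0) hy'
  have hdet : (Mat v).det ≠ 0 := fun h' => by simp [h'] at hdet0
  -- the coordinate map
  set cvec : W →ₗ[ℝ] (Fin d → ℝ) :=
    (Mat v).det⁻¹ • ((Matrix.cramer (Mat v)) ∘ₗ b.equivFun.toLinearMap) with hcvecdef
  have hcvec_apply : ∀ w : W, cvec w = (Mat v).det⁻¹ • Matrix.cramer (Mat v) (b.equivFun w) :=
    fun w => rfl
  have hsum : ∀ w : W, ∑ j, cvec w j • v j = w := by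
    intro w
    apply b.equivFun.injective
    rw [map_sum]
    funext i
    have h1 : ∀ j, b.equivFun (cvec w j • v j) = cvec w j • b.equivFun (v j) := fun j =>
      map_smul _ _ _
    simp only [h1]
    have h2 : (∑ j, cvec w j • b.equivFun (v j)) i = ∑ j, Mat v i j * cvec w j := by
      rw [Finset.sum_apply]
      apply Finset.sum_congr rfl
      intro j _
      simp [hMatdef, Module.Basis.equivFun_apply, mul_comm]
    rw [h2]
    have h3 : ∑ j, Mat v i j * cvec w j = (Mat v *ᵥ cvec w) i := rfl
    rw [h3, hcvec_apply, Matrix.mulVec_smul, Matrix.mulVec_cramer, smul_smul,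
      inv_mul_cancel₀ hdet, one_smul]
  -- the coordinate bound
  have hcb1 : ∀ u : W, N ↑u ≤ 1 → ∀ i, |cvec u i| ≤ 2 := by
    intro u hu i
    have h1 : cvec u i = (Mat v).det⁻¹ * Matrix.cramer (Mat v) (b.equivFun u) i := by
      rw [hcvec_apply]; simp
    have h2 : Matrix.cramer (Mat v) (b.equivFun u) i
        = ((Mat v).updateCol i (b.equivFun u)).det := Matrix.cramer_apply _ _ _
    have h3 : (Mat v).updateCol i (b.equivFun u) = Mat (Function.update v i u) := by
      ext k j
      rw [Matrix.updateCol_apply]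
      by_cases hji : j = i
      · subst hji; simp [hMatdef, Module.Basis.equivFun_apply]
      · simp [hMatdef, hji, Function.update_of_ne hji]
    have hupS : Function.update v i u ∈ S := by
      intro j
      by_cases hji : j = i
      · subst hji; simpa using hu
      · rw [Function.update_of_ne hji]; exact hvS j
    have h4 : |(Mat (Function.update v i u)).det| ≤ s := le_csSup hDbdd ⟨_, hupS, rfl⟩
    have h5 : s ≤ 2 * |(Mat v).det| := by linarith [hy']
    rw [h1, abs_mul, abs_inv, h2, h3]
    calc |(Mat v).det|⁻¹ * |(Mat (Function.update v i u)).det|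
        ≤ |(Mat v).det|⁻¹ * (2 * |(Mat v).det|) := by
          apply mul_le_mul_of_nonneg_left (le_trans h4 h5) (inv_nonneg.mpr hdet0.le)
      _ = 2 := by field_simp
  have hcb : ∀ w : W, ∀ i, |cvec w i| ≤ 2 * N ↑w := by
    intro w i
    rcases (hN.1 ↑w).lt_or_eq with hw | hw
    · set t : ℝ := N ↑w with htdef
      have hwt : w = t • (t⁻¹ • w) := by
        rw [smul_smul, mul_inv_cancel₀ hw.ne', one_smul]
      have hNt : N ↑(t⁻¹ • w) ≤ 1 := by
        have : N ↑(t⁻¹ • w) = |t⁻¹| * N ↑w := by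
          rw [Submodule.coe_smul, hN.2.1]
        rw [this, abs_of_pos (inv_pos.mpr hw), inv_mul_cancel₀ hw.ne']
      calc |cvec w i| = |t * cvec (t⁻¹ • w) i| := by
            conv_lhs => rw [hwt]
            rw [LinearMap.map_smul, Pi.smul_apply, smul_eq_mul]
        _ = t * |cvec (t⁻¹ • w) i| := by rw [abs_mul, abs_of_pos hw]
        _ ≤ t * 2 := mul_le_mul_of_nonneg_left (hcb1 _ hNt i) hw.le
        _ = 2 * N ↑w := by rw [htdef]; ring
    · have hw0 : w = 0 := Subtype.ext (hWpos _ w.2 hw.symm)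
      rw [hw0]
      simp only [map_zero, Pi.zero_apply, abs_zero]
      have h00 := hN.1 ↑(0 : W)
      linarith
  -- projections
  obtain ⟨projV, projW, hproj⟩ : ∃ (pV : (Fin n → ℝ) →ₗ[ℝ] V) (pW : (Fin n → ℝ) →ₗ[ℝ] W),
      ∀ x : Fin n → ℝ, ↑(pV x) + ↑(pW x) = x :=
    ⟨V.linearProjOfIsCompl W hVW, W.linearProjOfIsCompl V hVW.symm,
      fun x => Submodule.projection_add_projection_eq_self hVW x⟩
  have hNV : ∀ y : V, N ↑y = 0 := fun y => (hVmem ↑y).mp y.2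
  have hNw1 : ∀ x : Fin n → ℝ, N ↑(projW x) ≤ κ * N x := by
    intro x
    have h1 : (↑(projW x) : Fin n → ℝ) = x + (-(↑(projV x))) := by
      rw [eq_add_neg_iff_add_eq, add_comm]
      exact hproj x
    have h2 := hN.2.2 x (-(↑(projV x) : Fin n → ℝ))
    rw [← h1] at h2
    rw [hN.neg, hNV] at h2
    simpa using h2
  have hNw2 : ∀ x : Fin n → ℝ, N x ≤ κ * N ↑(projW x) := by
    intro x
    have h2 := hN.2.2 (↑(projV x) : Fin n → ℝ) (↑(projW x) : Fin n → ℝ)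
    rw [hproj x, hNV] at h2
    simpa using h2
  -- the linear map
  set L : (Fin n → ℝ) →ₗ[ℝ] (Fin n → ℝ) :=
    (Function.ExtendByZero.linearMap ℝ (Fin.castLE hdn)) ∘ₗ cvec ∘ₗ projW with hLdef
  have hLlt : ∀ (x : Fin n → ℝ) (j : Fin d), L x (Fin.castLE hdn j) = cvec (projW x) j := by
    intro x j
    simp only [hLdef, LinearMap.coe_comp, Function.comp_apply,
      Function.ExtendByZero.linearMap_apply]
    exact Function.Injective.extend_apply (Fin.castLE_injective hdn) _ _ _
  have hL0 : ∀ (x : Fin n → ℝ) (k : Fin n), ¬((k : ℕ) < d) → L x k = 0 := by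
    intro x k hk
    simp only [hLdef, LinearMap.coe_comp, Function.comp_apply,
      Function.ExtendByZero.linearMap_apply]
    rw [Function.extend_apply']
    · rfl
    · rintro ⟨j, rfl⟩
      exact hk j.2
  have habs : ∀ (x : Fin n → ℝ) (k : Fin n), |L x k| ≤ 2 * κ * N x := by
    intro x k
    by_cases hk : (k : ℕ) < d
    · have : k = Fin.castLE hdn ⟨k, hk⟩ := rfl
      rw [this, hLlt]
      calc |cvec (projW x) ⟨k, hk⟩| ≤ 2 * N ↑(projW x) := hcb _ _
        _ ≤ 2 * (κ * N x) := by
            apply mul_le_mul_of_nonneg_left (hNw1 x) (by norm_num)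
        _ = 2 * κ * N x := by ring
    · rw [hL0 x k hk]
      simp only [abs_zero]
      have := hN.1 x
      positivity
  -- the matrix
  set MA : Matrix (Fin n) (Fin n) ℝ := LinearMap.toMatrix' L with hMAdef
  have hMA : ∀ x, MA *ᵥ x = L x := by
    intro x
    rw [← Matrix.toLin'_apply, hMAdef, Matrix.toLin'_toMatrix']
  have hB : (MAᴴ * MA).PosSemidef := Matrix.posSemidef_conjTranspose_mul_self MA
  obtain ⟨S, hS, hSS⟩ := psd_sqrt_exists _ hB
  refine ⟨S, hS, ?_⟩
  have hAt : Sᵀ = S := by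
    rw [← Matrix.conjTranspose_eq_transpose_of_trivial]
    exact hS.1
  have heq : ∀ x, euclNorm (S *ᵥ x) = euclNorm (MA *ᵥ x) := by
    intro x
    rw [euclNorm_dot, euclNorm_dot, dot_self_mulVec, dot_self_mulVec, hAt,
      hSS, Matrix.conjTranspose_eq_transpose_of_trivial]
  intro x
  rw [show Matrix.mulVec S x = S *ᵥ x from rfl, heq, hMA]
  constructor
  · -- lower bound
    have h1 : N x ≤ κ * N ↑(projW x) := hNw2 x
    have h2 : (↑(projW x) : Fin n → ℝ) = ∑ j, cvec (projW x) j • (↑(v j) : Fin n → ℝ) := by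
      conv_lhs => rw [← hsum (projW x)]
      push_cast
      rfl
    have h3 : N ↑(projW x) ≤ κ ^ d * ∑ j, N (cvec (projW x) j • (↑(v j) : Fin n → ℝ)) := by
      rw [h2]
      have := hN.sum hκ (Finset.univ : Finset (Fin d))
        (fun j => cvec (projW x) j • (↑(v j) : Fin n → ℝ))
      simpa using this
    have h4 : ∑ j, N (cvec (projW x) j • (↑(v j) : Fin n → ℝ)) ≤ d * euclNorm (L x) := by
      calc ∑ j, N (cvec (projW x) j • (↑(v j) : Fin n → ℝ))
          ≤ ∑ _j : Fin d, euclNorm (L x) := by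
            apply Finset.sum_le_sum
            intro j _
            rw [hN.2.1]
            calc |cvec (projW x) j| * N ↑(v j) ≤ |cvec (projW x) j| * 1 :=
                  mul_le_mul_of_nonneg_left (hvS j) (abs_nonneg _)
              _ = |L x (Fin.castLE hdn j)| := by rw [mul_one, hLlt]
              _ ≤ euclNorm (L x) := abs_le_euclNorm _ _
        _ = d * euclNorm (L x) := by simp [mul_comm]
    have h5 : N x ≤ κ ^ (n + 1) * (n * euclNorm (L x)) := by
      have hd1 : κ ^ d ≤ κ ^ n := pow_le_pow_right₀ hκ hdn
      have he0 : 0 ≤ euclNorm (L x) := euclNorm_nonneg _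
      have hdle : (d : ℝ) ≤ n := by exact_mod_cast hdn
      calc N x ≤ κ * N ↑(projW x) := h1
        _ ≤ κ * (κ ^ d * ∑ j, N (cvec (projW x) j • (↑(v j) : Fin n → ℝ))) := by
            apply mul_le_mul_of_nonneg_left h3 hκ0.le
        _ ≤ κ * (κ ^ d * (d * euclNorm (L x))) := by
            apply mul_le_mul_of_nonneg_left _ hκ0.le
            apply mul_le_mul_of_nonneg_left h4 (by positivity)
        _ ≤ κ * (κ ^ n * (n * euclNorm (L x))) := by
            apply mul_le_mul_of_nonneg_left _ hκ0.le
            apply mul_le_mul hd1 _ (by positivity) (by positivity)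
            exact mul_le_mul_of_nonneg_right hdle he0
        _ = κ ^ (n + 1) * (n * euclNorm (L x)) := by ring
    rw [mul_comm (n : ℝ) (κ ^ (n + 1)), inv_mul_le_iff₀ (by positivity)]
    calc N x ≤ κ ^ (n + 1) * (n * euclNorm (L x)) := h5
      _ = κ ^ (n + 1) * (n : ℝ) * euclNorm (L x) := by ring
  · -- upper bound
    have h1 : euclNorm (L x) ≤ Real.sqrt n * (2 * κ * N x) := by
      apply euclNorm_le
      · have := hN.1 x
        positivity
      · exact habs x
    calc euclNorm (L x) ≤ Real.sqrt n * (2 * κ * N x) := h1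
      _ = 2 * κ * Real.sqrt n * N x := by ring
end

section
/- Let X and Y be real vector spaces equipped with quasi-norms ‖·‖_X and ‖·‖_Y with quasi-triangle constants κ_X and κ_Y, let n ≥ 1, let f = (f_1,…,f_n) ∈ X^n and g = (g_1,…,g_n) ∈ Y^n, let 0 < c₁ ≤ c₂, and let A and B be reducing matrices (with constants c₁, c₂) for f with respect to ‖·‖_X and for g with respect to ‖·‖_Y, respectively. Then there is a constant C depending only on n, c₁, c₂, κ_X, κ_Y and tuples u = (u_1,…,u_n) ∈ X^n, v = (v_1,…,v_n) ∈ Y^n such that ∑_{i=1}^n u_i ⊗ v_i = ∑_{i=1}^n f_i ⊗ g_i in the algebraic tensor product X ⊗_ℝ Y, and ∑_{i=1}^n ‖u_i‖_X·‖v_i‖_Y ≤ C·‖A·B‖_op. -/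
open scoped TensorProduct

universe u v

/-- The operator norm of an `n × n` real matrix with respect to the Euclidean norm. -/
noncomputable def opNorm {n : ℕ} (M : Matrix (Fin n) (Fin n) ℝ) : ℝ :=
  ‖Matrix.toEuclideanCLM (𝕜 := ℝ) M‖

/-- `A` is a reducing matrix for the tuple `f` with respect to `N` (with constants
`c₁ ≤ c₂`): `A` is positive semidefinite and `c₁|Ae| ≤ N(∑ eᵢ • fᵢ) ≤ c₂|Ae|`. -/
def IsReducing {X : Type*} [AddCommGroup X] [Module ℝ X] (N : X → ℝ)
    {n : ℕ} (f : Fin n → X) (c₁ c₂ : ℝ) (A : Matrix (Fin n) (Fin n) ℝ) : Prop :=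
  A.PosSemidef ∧ ∀ e : Fin n → ℝ,
    c₁ * euclNorm (A.mulVec e) ≤ N (∑ i, e i • f i) ∧
      N (∑ i, e i • f i) ≤ c₂ * euclNorm (A.mulVec e)

set_option maxHeartbeats 1000000
set_option synthInstance.maxHeartbeats 1000000

lemma euclNorm_eq_norm {k : ℕ} (x : EuclideanSpace ℝ (Fin k)) : euclNorm x = ‖x‖ := by
  rw [EuclideanSpace.norm_eq]
  simp [euclNorm, Real.norm_eq_abs, sq_abs]

lemma euclNorm_smul {k : ℕ} (c : ℝ) (x : Fin k → ℝ) :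
    euclNorm (c • x) = |c| * euclNorm x := by
  have h1 : euclNorm (c • x) = ‖c • ((WithLp.equiv 2 _).symm x : EuclideanSpace ℝ (Fin k))‖ :=
    euclNorm_eq_norm _
  rw [h1, norm_smul, Real.norm_eq_abs, ← euclNorm_eq_norm]
  rfl

lemma euclNorm_mulVec_le {k : ℕ} (M : Matrix (Fin k) (Fin k) ℝ) (x : Fin k → ℝ) :
    euclNorm (M.mulVec x) ≤ opNorm M * euclNorm x := by
  have h := (Matrix.toEuclideanCLM (𝕜 := ℝ) M).le_opNorm ((WithLp.equiv 2 _).symm x)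
  rw [WithLp.equiv_symm_apply, Matrix.toEuclideanCLM_toLp] at h
  have e1 : euclNorm (M.mulVec x) = ‖(WithLp.equiv 2 (Fin k → ℝ)).symm (M.mulVec x)‖ :=
    euclNorm_eq_norm ((WithLp.equiv 2 (Fin k → ℝ)).symm (M.mulVec x))
  have e2 : euclNorm x = ‖(WithLp.equiv 2 (Fin k → ℝ)).symm x‖ := euclNorm_eq_norm ((WithLp.equiv 2 (Fin k → ℝ)).symm x)
  rw [e1, e2]; exact h

lemma opNorm_transpose {k : ℕ} (M : Matrix (Fin k) (Fin k) ℝ) : opNorm M.transpose = opNorm M := by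
  have hs : M.transpose = star M := by
    ext i j; simp [Matrix.star_apply]
  unfold opNorm
  rw [hs, map_star, ContinuousLinearMap.star_eq_adjoint]
  exact (ContinuousLinearMap.adjoint (𝕜 := ℝ)).norm_map _

lemma completeness {k : ℕ} {A : Matrix (Fin k) (Fin k) ℝ} (hA : A.IsHermitian) (j l : Fin k) :
    ∑ i, hA.eigenvectorBasis i j * hA.eigenvectorBasis i l = if j = l then (1:ℝ) else 0 := by
  have h1 : ((hA.eigenvectorUnitary : Matrix (Fin k) (Fin k) ℝ) *
      star (hA.eigenvectorUnitary : Matrix (Fin k) (Fin k) ℝ)) = 1 :=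
    Unitary.coe_mul_star_self _
  have h2 := congrFun (congrFun h1 j) l
  rw [Matrix.mul_apply] at h2
  simp only [Matrix.star_apply, star_trivial, Matrix.IsHermitian.eigenvectorUnitary_apply] at h2
  rw [Matrix.one_apply] at h2
  simpa [mul_comm] using h2

/-- **The `n`-term projective tensor norm is dominated by `‖A·B‖_op`** (part of
Proposition 3.3): any tensor `∑ fᵢ ⊗ gᵢ` admits a representation `∑ uᵢ ⊗ vᵢ` of length `n`
with `∑ ‖uᵢ‖_X ‖vᵢ‖_Y ≲ ‖A·B‖_op`, where `A, B` are reducing matrices for `f, g`. -/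
theorem stmt9 (n : ℕ) (hn : 1 ≤ n) (c₁ c₂ κX κY : ℝ) (hc₁ : 0 < c₁) (hc₁₂ : c₁ ≤ c₂)
    (hκX : 1 ≤ κX) (hκY : 1 ≤ κY) :
    ∃ C : ℝ, 0 < C ∧
      ∀ (X : Type u) (Y : Type v) [AddCommGroup X] [Module ℝ X] [AddCommGroup Y] [Module ℝ Y]
        (Nx : X → ℝ) (Ny : Y → ℝ), IsQuasiNorm Nx κX → IsQuasiNorm Ny κY →
        ∀ (f : Fin n → X) (g : Fin n → Y) (A B : Matrix (Fin n) (Fin n) ℝ),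
          IsReducing Nx f c₁ c₂ A → IsReducing Ny g c₁ c₂ B →
          ∃ (u : Fin n → X) (v : Fin n → Y),
            (∑ i, u i ⊗ₜ[ℝ] v i) = (∑ i, f i ⊗ₜ[ℝ] g i) ∧
            ∑ i, Nx (u i) * Ny (v i) ≤ C * opNorm (A * B) := by
  have hc₂ : 0 < c₂ := lt_of_lt_of_le hc₁ hc₁₂
  refine ⟨(n : ℝ) * c₂ ^ 2, by positivity, ?_⟩
  intro X Y _ _ _ _ Nx Ny hNx hNy f g A B hfA hgB
  obtain ⟨hApsd, hAred⟩ := hfA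
  obtain ⟨hBpsd, hBred⟩ := hgB
  have hA : A.IsHermitian := hApsd.1
  have hB : B.IsHermitian := hBpsd.1
  set p : Fin n → Fin n → ℝ := fun i => ⇑(hA.eigenvectorBasis i) with hp
  refine ⟨fun i => ∑ j, p i j • f j, fun i => ∑ j, p i j • g j, ?_, ?_⟩
  · -- tensor identity
    have hcomp : ∀ j l, ∑ i, p i j * p i l = if j = l then (1:ℝ) else 0 :=
      fun j l => completeness hA j l
    calc ∑ i, (∑ j, p i j • f j) ⊗ₜ[ℝ] (∑ j, p i j • g j)
        = ∑ i, ∑ j, ∑ l, (p i j * p i l) • (f j ⊗ₜ[ℝ] g l) := by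
          refine Finset.sum_congr rfl fun i _ => ?_
          rw [TensorProduct.sum_tmul]
          refine Finset.sum_congr rfl fun j _ => ?_
          rw [TensorProduct.tmul_sum]
          refine Finset.sum_congr rfl fun l _ => ?_
          rw [TensorProduct.tmul_smul, TensorProduct.smul_tmul', smul_smul,
            mul_comm (p i l) (p i j)]
          exact (TensorProduct.smul_tmul' _ _ _).symm
      _ = ∑ j, ∑ l, (∑ i, p i j * p i l) • (f j ⊗ₜ[ℝ] g l) := by
          rw [Finset.sum_comm]
          congr 1; ext j
          rw [Finset.sum_comm]
          congr 1; ext l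
          rw [Finset.sum_smul]
      _ = ∑ j, f j ⊗ₜ[ℝ] g j := by
          simp [hcomp, ite_smul]
  · -- norm bound
    have hnorm1 : ∀ i, euclNorm (p i) = 1 := by
      intro i
      exact (euclNorm_eq_norm (hA.eigenvectorBasis i)).trans
        (hA.eigenvectorBasis.orthonormal.1 i)
    have hev : ∀ i, 0 ≤ hA.eigenvalues i := hApsd.eigenvalues_nonneg
    have hBA : opNorm (B * A) = opNorm (A * B) := by
      rw [← opNorm_transpose (A * B), Matrix.transpose_mul]
      congr 1
      rw [← Matrix.conjTranspose_eq_transpose_of_trivial, hB.eq,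
        ← Matrix.conjTranspose_eq_transpose_of_trivial, hA.eq]
    have key : ∀ i, Nx (∑ j, p i j • f j) * Ny (∑ j, p i j • g j) ≤ c₂ ^ 2 * opNorm (A * B) := by
      intro i
      have h1 := (hAred (p i)).2
      have h2 := (hBred (p i)).2
      have hAp : A.mulVec (p i) = hA.eigenvalues i • p i := hA.mulVec_eigenvectorBasis i
      have e1 : euclNorm (A.mulVec (p i)) = hA.eigenvalues i := by
        rw [hAp, euclNorm_smul, hnorm1, abs_of_nonneg (hev i), mul_one]
      rw [e1] at h1
      have step : Nx (∑ j, p i j • f j) * Ny (∑ j, p i j • g j) ≤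
          (c₂ * hA.eigenvalues i) * (c₂ * euclNorm (B.mulVec (p i))) := by
        exact mul_le_mul h1 h2 (hNy.1 _) (mul_nonneg hc₂.le (hev i))
      refine step.trans ?_
      have e2 : (c₂ * hA.eigenvalues i) * (c₂ * euclNorm (B.mulVec (p i))) =
          c₂ ^ 2 * euclNorm ((B * A).mulVec (p i)) := by
        rw [← Matrix.mulVec_mulVec, hAp, Matrix.mulVec_smul, euclNorm_smul,
          abs_of_nonneg (hev i)]
        ring
      rw [e2]
      have := euclNorm_mulVec_le (B * A) (p i)
      rw [hnorm1 i, mul_one, hBA] at this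
      exact mul_le_mul_of_nonneg_left this (by positivity)
    calc ∑ i, Nx (∑ j, p i j • f j) * Ny (∑ j, p i j • g j)
        ≤ ∑ _i : Fin n, c₂ ^ 2 * opNorm (A * B) := Finset.sum_le_sum fun i _ => key i
      _ = (n : ℝ) * c₂ ^ 2 * opNorm (A * B) := by
          rw [Finset.sum_const]; simp [mul_assoc]
end
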